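/- For n ≥ 2, there is no nonzero left-symmetric matrix in M_n(ℂ): for every nonzero A ∈ M_n(ℂ) there exists B with A ⊥ B but ¬(B ⊥ A). -/

import Mathlib

open scoped Matrix.Norms.L2Operator Matrix

/-- Action of a complex matrix on Euclidean space. -/
noncomputable def mulE {n : ℕ} (A : Matrix (Fin n) (Fin n) ℂ)
    (u : EuclideanSpace ℂ (Fin n)) : EuclideanSpace ℂ (Fin n) :=
  Matrix.toEuclideanCLM (𝕜 := ℂ) A u

/-- The set of norm-attaining vectors of `A`. -/
noncomputable def M₀ {n : ℕ} (A : Matrix (Fin n) (Fin n) ℂ) :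
    Set (EuclideanSpace ℂ (Fin n)) :=
  {u | ‖mulE A u‖ = ‖A‖ * ‖u‖}

/-- Birkhoff–James orthogonality in `M_n(ℂ)` with the operator norm. -/
noncomputable def BJ {n : ℕ} (A B : Matrix (Fin n) (Fin n) ℂ) : Prop :=
  ∀ c : ℂ, ‖A‖ ≤ ‖A + c • B‖

/-- The outgoing BJ neighborhood `A^⊥`. -/
noncomputable def orthSet {n : ℕ} (A : Matrix (Fin n) (Fin n) ℂ) :
    Set (Matrix (Fin n) (Fin n) ℂ) :=
  {B | BJ A B}

local notation "⟪" x ", " y "⟫" => @inner ℂ _ _ x y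

section Helpers
variable {E : Type*} [NormedAddCommGroup E] [InnerProductSpace ℂ E]

private lemma le_of_sq_le_sq' {x y : ℝ} (hy : 0 ≤ y) (hx : 0 ≤ x) (h : x ^ 2 ≤ y ^ 2) :
    x ≤ y := by
  by_contra hc; push_neg at hc; nlinarith

/-- Pythagoras for an orthonormal pair. -/
private lemma pyth2 {e f : E} (he : ‖e‖ = 1) (hf : ‖f‖ = 1) (hef : ⟪e, f⟫ = 0) (a b : ℂ) :
    ‖a • e + b • f‖ ^ 2 = ‖a‖ ^ 2 + ‖b‖ ^ 2 := by
  have h : ⟪a • e, b • f⟫ = 0 := by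
    rw [inner_smul_left, inner_smul_right, hef]; ring
  have := norm_add_sq_eq_norm_sq_add_norm_sq_of_inner_eq_zero (a • e) (b • f) h
  have h1 : ‖a • e‖ = ‖a‖ := by rw [norm_smul, he, mul_one]
  have h2 : ‖b • f‖ = ‖b‖ := by rw [norm_smul, hf, mul_one]
  rw [pow_two, pow_two, pow_two, ← h1, ← h2]; exact this

/-- Bessel inequality for an orthonormal pair. -/
private lemma bessel2 {u x : E} (hu : ‖u‖ = 1) (hx : ‖x‖ = 1) (hux : ⟪u, x⟫ = 0) (z : E) :
    ‖⟪u, z⟫‖ ^ 2 + ‖⟪x, z⟫‖ ^ 2 ≤ ‖z‖ ^ 2 := by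
  set p := ⟪u, z⟫
  set q := ⟪x, z⟫
  set y := z - p • u - q • x with hy
  have huu : ⟪u, u⟫ = 1 := by
    rw [inner_self_eq_norm_sq_to_K, hu]; norm_num
  have hxx : ⟪x, x⟫ = 1 := by
    rw [inner_self_eq_norm_sq_to_K, hx]; norm_num
  have hxu : ⟪x, u⟫ = 0 := by
    rw [← inner_conj_symm, hux, map_zero]
  have huy : ⟪u, y⟫ = 0 := by
    simp [hy, inner_sub_right, inner_smul_right, huu, hux, hu]; exact sub_self _
  have hxy : ⟪x, y⟫ = 0 := by
    simp [hy, inner_sub_right, inner_smul_right, hxx, hxu, hx]; exact sub_self _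
  have hz : z = (p • u + q • x) + y := by rw [hy]; abel
  have horth : ⟪p • u + q • x, y⟫ = 0 := by
    rw [inner_add_left, inner_smul_left, inner_smul_left, huy, hxy]; ring
  have h1 := norm_add_sq_eq_norm_sq_add_norm_sq_of_inner_eq_zero _ _ horth
  have h2 := pyth2 hu hx hux p q
  have h3 : ‖z‖ ^ 2 = ‖p • u + q • x‖ ^ 2 + ‖y‖ ^ 2 := by
    rw [hz]; nlinarith [h1]
  nlinarith [sq_nonneg ‖y‖]

private lemma scalar_ineq (p q : ℂ) :
    ‖q - p / 2‖ ^ 2 + ‖p + q‖ ^ 2 ≤ (9 / 4) * (‖p‖ ^ 2 + ‖q‖ ^ 2) := by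
  have h1 : q - p / 2 = (2 * q - p) * (1 / 2) := by ring
  have h2 : (2 * q - p).re = 2 * q.re - p.re := by simp
  have h3 : (2 * q - p).im = 2 * q.im - p.im := by simp
  rw [h1, norm_mul, mul_pow, Complex.sq_norm, Complex.normSq_apply, h2, h3]
  simp only [Complex.sq_norm, Complex.normSq_apply, Complex.add_re,
    Complex.add_im]
  norm_num
  nlinarith [sq_nonneg (p.re - q.re / 2), sq_nonneg (p.im - q.im / 2), sq_nonneg p.re,
    sq_nonneg q.im]

end Helpers

/-- Existence of a norm-attaining unit vector, finite dimension. -/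
private lemma exists_attain {n : ℕ} (hn : 0 < n)
    (T : EuclideanSpace ℂ (Fin n) →L[ℂ] EuclideanSpace ℂ (Fin n)) :
    ∃ u : EuclideanSpace ℂ (Fin n), ‖u‖ = 1 ∧ ‖T u‖ = ‖T‖ := by
  haveI : Nontrivial (EuclideanSpace ℂ (Fin n)) := by
    apply Module.nontrivial_of_finrank_pos (R := ℂ)
    rw [finrank_euclideanSpace]; simpa using hn
  obtain ⟨x0, hx0⟩ := exists_norm_eq (EuclideanSpace ℂ (Fin n)) (zero_le_one)
  have hne : (Metric.sphere (0 : EuclideanSpace ℂ (Fin n)) 1).Nonempty :=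
    ⟨x0, by simpa [mem_sphere_iff_norm] using hx0⟩
  obtain ⟨u, huS, hmax⟩ := (isCompact_sphere (0 : EuclideanSpace ℂ (Fin n)) 1).exists_isMaxOn
    hne ((continuous_norm.comp T.continuous).continuousOn)
  have hu1 : ‖u‖ = 1 := by simpa [mem_sphere_iff_norm] using huS
  refine ⟨u, hu1, le_antisymm (by simpa [hu1] using T.le_opNorm u) ?_⟩
  apply T.opNorm_le_bound (norm_nonneg _)
  intro z
  rcases eq_or_ne z 0 with rfl | hz
  · simp
  · have hzn : ‖z‖ ≠ 0 := norm_ne_zero_iff.mpr hz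
    set s : EuclideanSpace ℂ (Fin n) := ((‖z‖ : ℂ))⁻¹ • z with hs
    have hsn : ‖s‖ = 1 := by
      rw [hs, norm_smul]
      simp [norm_inv, hzn]
    have hsS : s ∈ Metric.sphere (0 : EuclideanSpace ℂ (Fin n)) 1 := by
      simpa [mem_sphere_iff_norm] using hsn
    have : ‖T s‖ ≤ ‖T u‖ := hmax hsS
    have hTs : ‖T s‖ = ‖z‖⁻¹ * ‖T z‖ := by
      rw [hs, map_smul, norm_smul]; simp
    rw [hTs] at this
    have hzpos : (0:ℝ) < ‖z‖ := lt_of_le_of_ne (norm_nonneg _) (Ne.symm hzn)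
    calc ‖T z‖ = ‖z‖ * (‖z‖⁻¹ * ‖T z‖) := by field_simp
    _ ≤ ‖z‖ * ‖T u‖ := by
        apply mul_le_mul_of_nonneg_left this hzpos.le
    _ = ‖T u‖ * ‖z‖ := by ring

/-- Orthogonal unit vector exists when `2 ≤ n`. -/
private lemma exists_unit_orth {n : ℕ} (hn : 2 ≤ n) (v : EuclideanSpace ℂ (Fin n)) :
    ∃ w : EuclideanSpace ℂ (Fin n), ‖w‖ = 1 ∧ ⟪v, w⟫ = 0 := by
  set K : Submodule ℂ (EuclideanSpace ℂ (Fin n)) := ℂ ∙ v with hK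
  have hdim : Module.finrank ℂ K + Module.finrank ℂ Kᗮ = n := by
    rw [Submodule.finrank_add_finrank_orthogonal, finrank_euclideanSpace, Fintype.card_fin]
  have hKle : Module.finrank ℂ K ≤ 1 := by
    rcases eq_or_ne v 0 with rfl | hv
    · rw [hK, Submodule.span_zero_singleton, finrank_bot]
      omega
    · rw [hK, finrank_span_singleton hv]
  have hpos : 0 < Module.finrank ℂ Kᗮ := by omega
  haveI : Nontrivial Kᗮ := Module.nontrivial_of_finrank_pos hpos
  obtain ⟨y0, hy0'⟩ := exists_ne (0 : Kᗮ)
  obtain ⟨y, hyK, hy0⟩ : ∃ y, y ∈ Kᗮ ∧ y ≠ 0 :=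
    ⟨(y0 : EuclideanSpace ℂ (Fin n)), y0.2, fun h => hy0' (Subtype.ext h)⟩
  have hyn : ‖y‖ ≠ 0 := norm_ne_zero_iff.mpr hy0
  refine ⟨((‖y‖ : ℂ))⁻¹ • y, ?_, ?_⟩
  · rw [norm_smul]; simp [hyn]
  · rw [inner_smul_right]
    have : ⟪v, y⟫ = 0 := by
      have := (Submodule.mem_orthogonal K y).mp hyK
      exact this v (Submodule.mem_span_singleton_self v)
    rw [this]; ring

set_option maxHeartbeats 4000000 in
set_option synthInstance.maxHeartbeats 400000 in
theorem no_left_symmetric {n : ℕ} (hn : 2 ≤ n) (A : Matrix (Fin n) (Fin n) ℂ)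
    (hA : A ≠ 0) :
    ∃ B : Matrix (Fin n) (Fin n) ℂ, BJ A B ∧ ¬ BJ B A := by
  classical
  set T := Matrix.toEuclideanCLM (𝕜 := ℂ) A with hTdef
  have hnorm : ∀ C : Matrix (Fin n) (Fin n) ℂ, ‖C‖ = ‖Matrix.toEuclideanCLM (𝕜 := ℂ) C‖ :=
    fun C => Matrix.cstar_norm_def C
  have hT0 : T ≠ 0 := by
    intro h
    apply hA
    rw [hTdef] at h
    have h2 := congrArg (Matrix.toEuclideanCLM (𝕜 := ℂ) (n := Fin n)).symm h
    simpa using h2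
  have hM : 0 < ‖T‖ := by
    rcases (norm_nonneg T).lt_or_eq with h | h
    · exact h
    · exact absurd ((ContinuousLinearMap.opNorm_zero_iff T).mp h.symm) hT0
  obtain ⟨u, hu1, huT⟩ := exists_attain (by omega) T
  have huu : ⟪u, u⟫ = 1 := by rw [inner_self_eq_norm_sq_to_K, hu1]; norm_num
  by_cases hcase : ∃ x : EuclideanSpace ℂ (Fin n), ‖x‖ = 1 ∧ ⟪u, x⟫ = 0 ∧ T x ≠ 0
  · -- Case 1 : some unit vector orthogonal to u is not killed by T
    obtain ⟨x, hx1, hux, hTx⟩ := hcase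
    have hxu : ⟪x, u⟫ = 0 := by rw [← inner_conj_symm, hux, map_zero]
    have hxx : ⟪x, x⟫ = 1 := by rw [inner_self_eq_norm_sq_to_K, hx1]; norm_num
    set a := ‖T x‖ with hadef
    have ha : 0 < a := by
      rw [hadef]
      exact lt_of_le_of_ne (norm_nonneg _) (Ne.symm (norm_ne_zero_iff.mpr hTx))
    have haM : a ≤ ‖T‖ := by
      have h := T.le_opNorm x
      rwa [hx1, mul_one] at h
    set S := (innerSL ℂ x).smulRight (T x) with hSdef
    have hSapp : ∀ z, S z = ⟪x, z⟫ • T x := fun z => by simp [hSdef]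
    obtain ⟨B, hφB⟩ : ∃ B, Matrix.toEuclideanCLM (𝕜 := ℂ) B = S :=
      ⟨_, (Matrix.toEuclideanCLM (𝕜 := ℂ) (n := Fin n)).apply_symm_apply S⟩
    refine ⟨B, ?_, ?_⟩
    · intro c
      rw [hnorm, hnorm, map_add, map_smul, hφB, ← hTdef]
      have h0 : (T + c • S) u = T u := by
        simp [ContinuousLinearMap.add_apply, hSapp, hxu]
      calc ‖T‖ = ‖(T + c • S) u‖ := by rw [h0, huT]
        _ ≤ ‖T + c • S‖ * ‖u‖ := (T + c • S).le_opNorm u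
        _ = ‖T + c • S‖ := by rw [hu1, mul_one]
    · intro hBJ
      set M := ‖T‖ with hMdef
      set t : ℝ := a ^ 2 / (2 * M ^ 2) with htdef
      have ht0 : 0 < t := by positivity
      have ht12 : t ≤ 1 / 2 := by
        rw [htdef, div_le_iff₀ (by positivity)]; nlinarith
      have htM : t * M ^ 2 = a ^ 2 / 2 := by rw [htdef]; field_simp
      have hcontr := hBJ (-(t : ℂ))
      have hBn : ‖B‖ = ‖S‖ := by rw [hnorm B, hφB]
      have hcomb : ‖B + (-(t : ℂ)) • A‖ = ‖S + (-(t : ℂ)) • T‖ := by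
        rw [hnorm (B + (-(t : ℂ)) • A), map_add, map_smul, hφB, ← hTdef]
      rw [hBn, hcomb] at hcontr
      have hSlow : a ≤ ‖S‖ := by
        have hx' : S x = T x := by rw [hSapp, hxx, one_smul]
        calc a = ‖S x‖ := by rw [hx']
          _ ≤ ‖S‖ * ‖x‖ := S.le_opNorm x
          _ = ‖S‖ := by rw [hx1, mul_one]
      set r := Real.sqrt ((1 - t) ^ 2 * a ^ 2 + t ^ 2 * M ^ 2) with hrdef
      have hr0 : 0 ≤ r := Real.sqrt_nonneg _
      have hrsq : r ^ 2 = (1 - t) ^ 2 * a ^ 2 + t ^ 2 * M ^ 2 :=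
        Real.sq_sqrt (by positivity)
      have hub : ‖S + (-(t : ℂ)) • T‖ ≤ r := by
        apply ContinuousLinearMap.opNorm_le_bound _ hr0
        intro z
        set α := ⟪x, z⟫ with hα
        set y := z - α • x with hy
        have hxy : ⟪x, y⟫ = 0 := by
          rw [hy, inner_sub_right, inner_smul_right, hxx]; ring
        have hzdec : z = α • x + y := by rw [hy]; abel
        have hTz : T z = α • T x + T y := by
          conv_lhs => rw [hzdec]
          rw [map_add, map_smul]
        have hexp : (S + (-(t : ℂ)) • T) z = ((1 - (t : ℂ)) * α) • T x + (-(t : ℂ)) • T y := by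
          rw [ContinuousLinearMap.add_apply, ContinuousLinearMap.smul_apply, hSapp, hTz]
          module
        have hn1 : ‖((1 - (t : ℂ)) * α) • T x‖ = (1 - t) * ‖α‖ * a := by
          rw [norm_smul, norm_mul]
          have h1t : ‖(1 - (t : ℂ))‖ = 1 - t := by
            rw [show (1 - (t : ℂ)) = ((1 - t : ℝ) : ℂ) by push_cast; ring, Complex.norm_real,
              Real.norm_eq_abs, abs_of_nonneg (by linarith)]
          rw [h1t]
        have hn2 : ‖(-(t : ℂ)) • T y‖ ≤ t * (M * ‖y‖) := by
          rw [norm_smul]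
          have hnt : ‖(-(t : ℂ))‖ = t := by
            rw [norm_neg, Complex.norm_real, Real.norm_eq_abs, abs_of_pos ht0]
          rw [hnt]
          exact mul_le_mul_of_nonneg_left (T.le_opNorm y) ht0.le
        have hpyth : ‖α‖ ^ 2 + ‖y‖ ^ 2 = ‖z‖ ^ 2 := by
          have hperp : ⟪α • x, y⟫ = 0 := by rw [inner_smul_left, hxy]; ring
          have hpe := norm_add_sq_eq_norm_sq_add_norm_sq_of_inner_eq_zero _ _ hperp
          have hax : ‖α • x‖ = ‖α‖ := by rw [norm_smul, hx1, mul_one]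
          rw [hzdec, pow_two, pow_two, pow_two, hpe, hax]
        have hle : ‖(S + (-(t : ℂ)) • T) z‖ ≤ (1 - t) * ‖α‖ * a + t * (M * ‖y‖) := by
          rw [hexp]
          refine le_trans (norm_add_le _ _) ?_
          rw [hn1]; linarith [hn2]
        have hcs : ((1 - t) * ‖α‖ * a + t * (M * ‖y‖)) ^ 2 ≤ r ^ 2 * ‖z‖ ^ 2 := by
          rw [hrsq, ← hpyth]
          nlinarith [sq_nonneg ((1 - t) * a * ‖y‖ - t * M * ‖α‖), norm_nonneg α, norm_nonneg y]
        apply le_of_sq_le_sq' (by positivity) (norm_nonneg _)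
        calc ‖(S + (-(t : ℂ)) • T) z‖ ^ 2 ≤ ((1 - t) * ‖α‖ * a + t * (M * ‖y‖)) ^ 2 := by
              apply pow_le_pow_left₀ (norm_nonneg _) hle
          _ ≤ (r * ‖z‖) ^ 2 := by rw [mul_pow]; exact hcs
      have hra : r < a := by
        apply lt_of_pow_lt_pow_left₀ 2 ha.le
        rw [hrsq]
        have h1 : t ^ 2 * M ^ 2 = t * a ^ 2 / 2 := by
          rw [pow_two, mul_assoc, htM]; ring
        have h2 : t * (t * a ^ 2) ≤ (1 / 2) * (t * a ^ 2) := by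
          apply mul_le_mul_of_nonneg_right ht12
          positivity
        nlinarith [h1, h2, mul_pos ht0 (mul_pos ha ha)]
      linarith [le_trans hSlow (le_trans hcontr hub)]
  · -- Case 2 : T vanishes on the orthogonal complement of u, i.e. T is rank one
    push_neg at hcase
    set M := ‖T‖ with hMdef
    set v := T u with hvdef
    have hvM : ‖v‖ = M := huT
    have hTz : ∀ z, T z = ⟪u, z⟫ • v := by
      intro z
      set y := z - ⟪u, z⟫ • u with hy
      have huy : ⟪u, y⟫ = 0 := by
        rw [hy, inner_sub_right, inner_smul_right, huu]; ring
      have hTy : T y = 0 := by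
        rcases eq_or_ne y 0 with h0 | h0
        · rw [h0, map_zero]
        · have hyn : ‖y‖ ≠ 0 := norm_ne_zero_iff.mpr h0
          have h1 : ‖((‖y‖ : ℂ))⁻¹ • y‖ = 1 := by
            rw [norm_smul]; simp [hyn]
          have h2 : ⟪u, ((‖y‖ : ℂ))⁻¹ • y⟫ = 0 := by
            rw [inner_smul_right, huy]; ring
          have h3 := hcase _ h1 h2
          have h4 : T y = ((‖y‖ : ℂ)) • T (((‖y‖ : ℂ))⁻¹ • y) := by
            rw [map_smul, smul_smul, mul_inv_cancel₀ (by exact_mod_cast hyn), one_smul]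
          rw [h4, h3, smul_zero]
      have hzdec : z = ⟪u, z⟫ • u + y := by rw [hy]; abel
      conv_lhs => rw [hzdec]
      rw [map_add, map_smul, hTy, add_zero, hvdef]
    obtain ⟨x, hx1, hux⟩ := exists_unit_orth hn u
    obtain ⟨w, hw1, hvw⟩ := exists_unit_orth hn v
    have hxu : ⟪x, u⟫ = 0 := by rw [← inner_conj_symm, hux, map_zero]
    have hxx : ⟪x, x⟫ = 1 := by rw [inner_self_eq_norm_sq_to_K, hx1]; norm_num
    have hMne : (M : ℂ) ≠ 0 := by
      exact_mod_cast ne_of_gt hM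
    set vh := ((M : ℂ))⁻¹ • v with hvh
    have hvh1 : ‖vh‖ = 1 := by
      rw [hvh, norm_smul, norm_inv, Complex.norm_real, Real.norm_eq_abs, abs_of_pos hM, hvM]
      field_simp
    have hvdec2 : v = (M : ℂ) • vh := by
      rw [hvh, smul_smul, mul_inv_cancel₀ hMne, one_smul]
    have hvhw : ⟪vh, w⟫ = 0 := by
      rw [hvh, inner_smul_left, hvw, mul_zero]
    set S := (innerSL ℂ x).smulRight vh + ((innerSL ℂ u) + (innerSL ℂ x)).smulRight w
      with hSdef
    have hSapp : ∀ z, S z = ⟪x, z⟫ • vh + (⟪u, z⟫ + ⟪x, z⟫) • w := fun z => by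
      rw [hSdef]; rfl
    obtain ⟨B, hφB⟩ : ∃ B, Matrix.toEuclideanCLM (𝕜 := ℂ) B = S :=
      ⟨_, (Matrix.toEuclideanCLM (𝕜 := ℂ) (n := Fin n)).apply_symm_apply S⟩
    refine ⟨B, ?_, ?_⟩
    · intro c
      rw [hnorm, hnorm, map_add, map_smul, hφB, ← hTdef]
      have hSu : S u = w := by
        rw [hSapp, hxu, huu]; simp
      have h0 : (T + c • S) u = (M : ℂ) • vh + c • w := by
        rw [ContinuousLinearMap.add_apply, ContinuousLinearMap.smul_apply, hSu, ← hvdef, hvdec2]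
      have hpy := pyth2 hvh1 hw1 hvhw (M : ℂ) c
      have hnormM : ‖((M : ℝ) : ℂ)‖ = M := by
        rw [Complex.norm_real, Real.norm_eq_abs, abs_of_pos hM]
      have h1 : M ≤ ‖(T + c • S) u‖ := by
        apply le_of_sq_le_sq' (norm_nonneg _) hM.le
        rw [h0, hpy, hnormM]
        nlinarith [sq_nonneg ‖c‖]
      calc ‖T‖ = M := hMdef.symm
        _ ≤ ‖(T + c • S) u‖ := h1
        _ ≤ ‖T + c • S‖ := by simpa [hu1] using (T + c • S).le_opNorm u
    · intro hBJ
      set c₀ : ℂ := -(1 / 2) * ((M : ℂ))⁻¹ with hc₀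
      have hcontr := hBJ c₀
      have hBn : ‖B‖ = ‖S‖ := by rw [hnorm B, hφB]
      have hcomb : ‖B + c₀ • A‖ = ‖S + c₀ • T‖ := by
        rw [hnorm (B + c₀ • A), map_add, map_smul, hφB, ← hTdef]
      rw [hBn, hcomb] at hcontr
      have hub : ‖S + c₀ • T‖ ≤ 3 / 2 := by
        apply ContinuousLinearMap.opNorm_le_bound _ (by norm_num)
        intro z
        set p := ⟪u, z⟫ with hp
        set q := ⟪x, z⟫ with hq
        have hexp : (S + c₀ • T) z = (q - p / 2) • vh + (p + q) • w := by
          rw [ContinuousLinearMap.add_apply, ContinuousLinearMap.smul_apply, hSapp, hTz, hvdec2]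
          have hkey : c₀ • ((⟪u, z⟫ : ℂ) • ((M : ℂ) • vh)) = (-(p / 2)) • vh := by
            rw [smul_smul, smul_smul, ← hp]
            congr 1
            rw [hc₀]; field_simp
          rw [hkey]
          module
        rw [hexp]
        apply le_of_sq_le_sq' (by positivity) (norm_nonneg _)
        rw [pyth2 hvh1 hw1 hvhw]
        have h1 := scalar_ineq p q
        have h2 := bessel2 hu1 hx1 hux z
        nlinarith [h1, h2]
      set z₀ := (2 : ℂ) • u + (3 : ℂ) • x with hz₀
      have hz₀n : ‖z₀‖ ^ 2 = 13 := by
        rw [hz₀, pyth2 hu1 hx1 hux]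
        norm_num
      have hSz₀ : S z₀ = (3 : ℂ) • vh + (5 : ℂ) • w := by
        rw [hSapp]
        have e1 : ⟪u, z₀⟫ = 2 := by
          rw [hz₀, inner_add_right, inner_smul_right, inner_smul_right, huu, hux]; ring
        have e2 : ⟪x, z₀⟫ = 3 := by
          rw [hz₀, inner_add_right, inner_smul_right, inner_smul_right, hxu, hxx]; ring
        rw [e1, e2]; norm_num
      have hSz₀n : ‖S z₀‖ ^ 2 = 34 := by
        rw [hSz₀, pyth2 hvh1 hw1 hvhw]
        norm_num
      have hle : ‖S z₀‖ ≤ (3 / 2) * ‖z₀‖ := by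
        calc ‖S z₀‖ ≤ ‖S‖ * ‖z₀‖ := S.le_opNorm z₀
          _ ≤ (3 / 2) * ‖z₀‖ :=
            mul_le_mul_of_nonneg_right (le_trans hcontr hub) (norm_nonneg _)
      nlinarith [hle, hz₀n, hSz₀n, norm_nonneg (S z₀), norm_nonneg z₀]
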